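/- Let u be a real number with 0 < u < arccosh(3/2), p a positive integer, ξ := u + 2pπi, and define g : ℝ → ℂ by g(x) := 4·sinh((ξ/2)(1+x))·sinh((ξ/2)(1−x)). Then for every integer m with 0 ≤ m ≤ p, one has g(m/p) = 2(cosh u − cosh(mu/p)) ∈ [0, 1), and there exists δ_m > 0 such that |g(x)| < 1 for every real x with |x − m/p| < δ_m; in particular |g(l/N)| < 1 for all positive integers l, N with m/p − δ_m < l/N < m/p + δ_m. -/
import Mathlib


open Complex

/-- Inverse hyperbolic cosine. -/
noncomputable def arccosh (x : ℝ) : ℝ := Real.log (x + Real.sqrt (x ^ 2 - 1))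

/-- ξ = u + 2pπi -/
noncomputable def xiC (u : ℝ) (p : ℕ) : ℂ := (u : ℂ) + 2 * p * Real.pi * Complex.I

/-- g(x) = 4 sinh((ξ/2)(1+x)) sinh((ξ/2)(1−x)). -/
noncomputable def gfun (u : ℝ) (p : ℕ) (x : ℝ) : ℂ :=
  4 * Complex.sinh ((xiC u p / 2) * (1 + (x : ℂ))) *
    Complex.sinh ((xiC u p / 2) * (1 - (x : ℂ)))

lemma four_sinh_mul_sinh (A B : ℂ) :
    4 * Complex.sinh A * Complex.sinh B =
      2 * (Complex.cosh (A + B) - Complex.cosh (A - B)) := by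
  rw [Complex.cosh_add, Complex.cosh_sub]; ring

lemma cosh_add_int_two_pi_I (a : ℝ) (k : ℤ) :
    Complex.cosh ((a : ℂ) + 2 * k * Real.pi * Complex.I) = (Real.cosh a : ℂ) := by
  have h1 : ((2 : ℂ) * k * Real.pi * Complex.I) = ((2 * k * Real.pi : ℝ) : ℂ) * Complex.I := by
    push_cast; ring
  rw [Complex.cosh_add, h1, Complex.cosh_mul_I, Complex.sinh_mul_I]
  have hc : Complex.cos ((2 * (k : ℝ) * Real.pi : ℝ) : ℂ) = 1 := by
    have := Complex.cos_int_mul_two_pi k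
    rw [show (((2 * (k : ℝ) * Real.pi : ℝ)) : ℂ) = (k : ℂ) * (2 * Real.pi) by push_cast; ring]
    exact_mod_cast this
  have hs : Complex.sin ((2 * (k : ℝ) * Real.pi : ℝ) : ℂ) = 0 := by
    have := Complex.sin_int_mul_pi (2 * k)
    rw [show (((2 * (k : ℝ) * Real.pi : ℝ)) : ℂ) = ((2 * k : ℤ) : ℂ) * Real.pi by push_cast; ring]
    exact_mod_cast this
  rw [hc, hs, Complex.ofReal_cosh]
  ring

lemma cosh_lt_of_lt_arccosh {u : ℝ} (hu0 : 0 < u) (hu1 : u < arccosh (3/2)) :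
    Real.cosh u < 3/2 := by
  have hs : Real.sqrt ((3/2 : ℝ) ^ 2 - 1) = Real.sqrt (5/4) := by norm_num
  have hs2 : Real.sqrt (5/4 : ℝ) ^ 2 = 5/4 := Real.sq_sqrt (by norm_num)
  have hs0 : (0:ℝ) ≤ Real.sqrt (5/4) := Real.sqrt_nonneg _
  have hx : (0:ℝ) < 3/2 + Real.sqrt (5/4) := by linarith
  have hlog : Real.cosh (arccosh (3/2)) = 3/2 := by
    rw [arccosh, hs, Real.cosh_log hx]
    have hinv : (3/2 + Real.sqrt (5/4) : ℝ)⁻¹ = 3/2 - Real.sqrt (5/4) := by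
      apply inv_eq_of_mul_eq_one_right
      nlinarith [hs2]
    rw [hinv]; ring
  calc Real.cosh u < Real.cosh (arccosh (3/2)) := by
        rw [Real.cosh_lt_cosh]
        rw [_root_.abs_of_pos hu0, abs_of_pos (lt_trans hu0 hu1)]
        exact hu1
    _ = 3/2 := hlog

/-- Lemma 7.3: `g(m/p) = 2(cosh u − cosh(mu/p)) ∈ [0,1)`, and `|g| < 1` near `m/p`. -/
theorem gfun_small_near_rationals (u : ℝ) (hu0 : 0 < u) (hu1 : u < arccosh (3/2))
    (p : ℕ) (hp : 0 < p) :
    ∀ m : ℕ, m ≤ p →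
      gfun u p ((m : ℝ) / p) =
        ((2 * (Real.cosh u - Real.cosh ((m : ℝ) * u / p)) : ℝ) : ℂ) ∧
      0 ≤ 2 * (Real.cosh u - Real.cosh ((m : ℝ) * u / p)) ∧
      2 * (Real.cosh u - Real.cosh ((m : ℝ) * u / p)) < 1 ∧
      ∃ δ : ℝ, 0 < δ ∧
        (∀ x : ℝ, |x - (m : ℝ) / p| < δ → ‖gfun u p x‖ < 1) ∧
        (∀ l N : ℕ, 0 < l → 0 < N →
          (m : ℝ) / p - δ < (l : ℝ) / N → (l : ℝ) / N < (m : ℝ) / p + δ →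
          ‖gfun u p ((l : ℝ) / N)‖ < 1) := by
  intro m hm
  have hpR : (p : ℝ) ≠ 0 := Nat.cast_ne_zero.mpr hp.ne'
  have hpC : (p : ℂ) ≠ 0 := Nat.cast_ne_zero.mpr hp.ne'
  -- the value at m/p
  have hval : gfun u p ((m : ℝ) / p) =
      ((2 * (Real.cosh u - Real.cosh ((m : ℝ) * u / p)) : ℝ) : ℂ) := by
    rw [gfun, four_sinh_mul_sinh]
    have hA : xiC u p / 2 * (1 + ((((m : ℝ) / p) : ℝ) : ℂ)) +
        xiC u p / 2 * (1 - ((((m : ℝ) / p) : ℝ) : ℂ)) = xiC u p := by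
      ring
    have hB : xiC u p / 2 * (1 + ((((m : ℝ) / p) : ℝ) : ℂ)) -
        xiC u p / 2 * (1 - ((((m : ℝ) / p) : ℝ) : ℂ)) =
        ((((m : ℝ) * u / p) : ℝ) : ℂ) + 2 * (m : ℤ) * Real.pi * Complex.I := by
      rw [xiC]
      push_cast
      field_simp
      ring
    rw [hA, hB]
    have h1 : Complex.cosh (xiC u p) = (Real.cosh u : ℂ) := by
      have := cosh_add_int_two_pi_I u (p : ℤ)
      rw [xiC]
      rw [show ((u : ℂ) + 2 * (p : ℂ) * Real.pi * Complex.I) =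
        (u : ℂ) + 2 * ((p : ℤ) : ℂ) * Real.pi * Complex.I by push_cast; ring]
      exact this
    rw [h1, cosh_add_int_two_pi_I ((m : ℝ) * u / p) (m : ℤ)]
    push_cast
    ring
  refine ⟨hval, ?_, ?_, ?_⟩
  case _ =>
    have h1 : Real.cosh ((m : ℝ) * u / p) ≤ Real.cosh u := by
      rw [Real.cosh_le_cosh]
      have h0 : (0:ℝ) ≤ (m : ℝ) * u / p := by positivity
      rw [_root_.abs_of_nonneg h0, _root_.abs_of_pos hu0]
      rw [div_le_iff₀ (by positivity)]
      have : (m : ℝ) ≤ p := Nat.cast_le.mpr hm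
      nlinarith
    linarith
  case _ =>
    have h1 : Real.cosh u < 3/2 := cosh_lt_of_lt_arccosh hu0 hu1
    have h2 : (1:ℝ) ≤ Real.cosh ((m : ℝ) * u / p) := Real.one_le_cosh _
    linarith
  case _ =>
    -- continuity argument
    have hcont : Continuous (fun x : ℝ => ‖gfun u p x‖) := by
      apply Continuous.norm
      unfold gfun
      fun_prop
    have hlt : ‖gfun u p ((m : ℝ) / p)‖ < 1 := by
      rw [hval, Complex.norm_real]
      have h1 : Real.cosh u < 3/2 := cosh_lt_of_lt_arccosh hu0 hu1
      have h2 : (1:ℝ) ≤ Real.cosh ((m : ℝ) * u / p) := Real.one_le_cosh _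
      have h3 : Real.cosh ((m : ℝ) * u / p) ≤ Real.cosh u := by
        rw [Real.cosh_le_cosh]
        have h0 : (0:ℝ) ≤ (m : ℝ) * u / p := by positivity
        rw [_root_.abs_of_nonneg h0, _root_.abs_of_pos hu0]
        rw [div_le_iff₀ (by positivity)]
        have : (m : ℝ) ≤ p := Nat.cast_le.mpr hm
        nlinarith
      rw [Real.norm_eq_abs, _root_.abs_of_nonneg (by linarith)]
      linarith
    have hev : ∀ᶠ x in nhds ((m : ℝ) / p), ‖gfun u p x‖ < 1 :=
      (hcont.continuousAt).eventually_lt continuousAt_const hlt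
    rw [Metric.eventually_nhds_iff] at hev
    obtain ⟨δ, hδ0, hδ⟩ := hev
    refine ⟨δ, hδ0, fun x hx => hδ (by rwa [Real.dist_eq]), fun l N _ _ h1 h2 => ?_⟩
    apply hδ
    rw [Real.dist_eq, abs_sub_lt_iff]
    constructor <;> linarith
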